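/- arXiv:1306.0093 — 2 statements merged into one kernel-verified Lean document; each statement's English description precedes it below -/
import Mathlib

section
/- Let G be a graph with n vertices and no isolated vertices. Then for any 1 ≤ k ≤ n, S⁺_k(G) ≤ 2e(G) + 2k − n. -/
open Matrix Polynomial

/-- Sum of the `k` largest entries of a finitely-indexed family of reals. -/
noncomputable def sumKLargest {V : Type*} [Fintype V] (v : V → ℝ) (k : ℕ) : ℝ :=
  (((Finset.univ.val.map v).toList.mergeSort (fun a b => decide (b ≤ a))).take k).sum

open Classical in
/-- The signless Laplacian matrix `Q(G) = D(G) + A(G)` of a simple graph. -/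
noncomputable def signlessLap {V : Type*} [Fintype V] [DecidableEq V]
    (G : SimpleGraph V) : Matrix V V ℝ :=
  G.degMatrix ℝ + G.adjMatrix ℝ

theorem signlessLap_isHermitian {V : Type*} [Fintype V] [DecidableEq V]
    (G : SimpleGraph V) : (signlessLap G).IsHermitian := by
  classical
  ext i j
  by_cases h : i = j
  · subst h; simp [signlessLap]
  · simp [signlessLap, Matrix.conjTranspose_apply, SimpleGraph.degMatrix,
      Matrix.diagonal_apply, h, Ne.symm h, SimpleGraph.adj_comm]

/-- `S⁺_k(G)`: the sum of the `k` largest signless Laplacian eigenvalues of `G`. -/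
noncomputable def Splus {V : Type*} [Fintype V] [DecidableEq V]
    (G : SimpleGraph V) (k : ℕ) : ℝ :=
  sumKLargest (signlessLap_isHermitian G).eigenvalues k

/-- `e(G)`: the number of edges of `G`. -/
noncomputable def numEdges {V : Type*} (G : SimpleGraph V) : ℕ := G.edgeSet.ncard

/-!
Let `Q` be the signless Laplacian and `P` the orthogonal projection onto the eigenvectors of its
`k` largest eigenvalues. Then `S⁺_k(G) = tr (P Q) = 2 e(G) - tr ((1 - P) Q)` and `tr (1 - P) = n - k`,
so it suffices to show `tr (M Q) ≥ 2 tr M - n` whenever `0 ≤ M ≤ 1`. Since `Q = ∑ₑ xₑ xₑᵀ` over the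
edges (`xₑ` the incidence vector), `tr (M Q) = ∑ₑ xₑᵀ M xₑ` only decreases when we pass to a spanning
star forest, which exists because `G` has no isolated vertices. For a star with centre `c` and
leaves `L ≠ ∅`, `∑_{v ∈ L} (e_c + e_v)ᵀ M (e_c + e_v) ≥ 2 (M c c + ∑_{v ∈ L} M v v) - (#L + 1)`,
and summing over the stars gives `2 tr M - n`.
-/

open Function

section

variable {V : Type*} [Fintype V] [DecidableEq V]

theorem sumKLargest_eq_sum (v : V → ℝ) {k : ℕ} (hk : k ≤ Fintype.card V) :
    ∃ T : Finset V, T.card = k ∧ sumKLargest v k = ∑ i ∈ T, v i := by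
  set sorted := (Finset.univ.val.map v).toList.mergeSort (fun a b => decide (b ≤ a))
  have hperm : sorted.Perm (Finset.univ.toList.map v) := by
    refine (List.mergeSort_perm _ _).trans (Multiset.coe_eq_coe.mp ?_)
    rw [Multiset.coe_toList, ← Multiset.map_coe, Finset.coe_toList]
  obtain ⟨l, hl, hsub⟩ := List.exists_perm_sublist (List.take_sublist k sorted) hperm
  obtain ⟨l', hl', rfl⟩ := List.sublist_map_iff.mp hsub
  have hnodup : l'.Nodup := hl'.nodup (Finset.nodup_toList _)
  refine ⟨l'.toFinset, ?_, ?_⟩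
  · rw [List.toFinset_card_of_nodup hnodup, ← List.length_map (f := v), hl.length_eq,
      List.length_take, hperm.length_eq]
    simpa using hk
  · rw [sumKLargest, ← hl.sum_eq, List.sum_toFinset _ hnodup]

theorem Matrix.IsHermitian.exists_trace_mul_eq_sum_eigenvalues {n : Type*} [Fintype n]
    [DecidableEq n] {A : Matrix n n ℝ} (hA : A.IsHermitian) (T : Finset n) :
    ∃ P : Matrix n n ℝ, P.PosSemidef ∧ (1 - P).PosSemidef ∧ P.trace = T.card ∧
      (P * A).trace = ∑ i ∈ T, hA.eigenvalues i := by
  set U := hA.eigenvectorUnitary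
  set d : n → ℝ := fun i => if i ∈ T then 1 else 0
  have hconj_psd : ∀ e : n → ℝ, 0 ≤ e → (Unitary.conjStarAlgAut ℝ _ U (diagonal e)).PosSemidef :=
    fun e he => by
      rw [Unitary.conjStarAlgAut_apply, Unitary.isUnit_coe.posSemidef_star_right_conjugate_iff]
      exact posSemidef_diagonal_iff.mpr he
  have htrace : ∀ e : n → ℝ, (Unitary.conjStarAlgAut ℝ _ U (diagonal e)).trace = ∑ i, e i := by
    intro e
    rw [Unitary.conjStarAlgAut_apply, trace_mul_cycle, Unitary.coe_star_mul_self, one_mul,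
      trace_diagonal]
  refine ⟨Unitary.conjStarAlgAut ℝ _ U (diagonal d), hconj_psd d fun i => by positivity, ?_, ?_, ?_⟩
  · rw [← map_one (Unitary.conjStarAlgAut ℝ _ U), ← map_sub, ← diagonal_one', diagonal_sub]
    exact hconj_psd _ fun i => by simp only [d]; split_ifs <;> simp
  · rw [htrace]; simp [d]
  · conv_lhs => rw [hA.spectral_theorem]
    rw [← map_mul, diagonal_mul_diagonal, htrace]
    simp [d]

theorem Matrix.PosSemidef.dotProduct_mulVec_le {N : Matrix V V ℝ} (hN : N.PosSemidef)
    {s : Finset V} {x : V → ℝ} (hx : ∀ i ∉ s, x i = 0) :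
    x ⬝ᵥ N *ᵥ x ≤ (x ⬝ᵥ x) * ∑ j ∈ s, N j j := by
  obtain ⟨B, rfl⟩ : ∃ B : Matrix V V ℝ, N = star B * B := by
    open scoped MatrixOrder Matrix.Norms.L2Operator in
    exact CStarAlgebra.nonneg_iff_eq_star_mul_self.mp hN.nonneg
  have hsum : ∀ f : V → ℝ, ∑ j, x j * f j = ∑ j ∈ s, x j * f j := fun f =>
    (Finset.sum_subset (Finset.subset_univ s) fun j _ hj => by simp [hx j hj]).symm
  have hrow : ∀ i, (B *ᵥ x) i ^ 2 ≤ (∑ j ∈ s, x j ^ 2) * ∑ j ∈ s, B i j ^ 2 := fun i => by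
    rw [mulVec, dotProduct]
    simpa [hsum, mul_comm] using Finset.sum_mul_sq_le_sq_mul_sq s x (B i)
  calc x ⬝ᵥ (star B * B) *ᵥ x = ∑ i, (B *ᵥ x) i ^ 2 := by
        rw [← mulVec_mulVec, dotProduct_mulVec, star_eq_conjTranspose, vecMul_conjTranspose]
        simp [dotProduct, sq]
    _ ≤ ∑ i, (∑ j ∈ s, x j ^ 2) * ∑ j ∈ s, B i j ^ 2 := Finset.sum_le_sum fun i _ => hrow i
    _ = (x ⬝ᵥ x) * ∑ j ∈ s, (star B * B) j j := by
        rw [← Finset.mul_sum, dotProduct, hsum x, Finset.sum_comm]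
        simp [mul_apply, sq]

theorem dotProduct_mulVec_smul_single_add_smul_sum_single (M : Matrix V V ℝ) (c : V)
    (L : Finset V) (α γ : ℝ) :
    (α • Pi.single c 1 + γ • ∑ v ∈ L, Pi.single v 1) ⬝ᵥ
        M *ᵥ (α • Pi.single c 1 + γ • ∑ v ∈ L, Pi.single v 1) =
      α ^ 2 * M c c + α * γ * ∑ v ∈ L, (M c v + M v c) + γ ^ 2 * ∑ v ∈ L, ∑ w ∈ L, M v w := by
  simp only [mulVec_add, mulVec_smul, mulVec_sum, add_dotProduct, dotProduct_add, smul_dotProduct,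
    dotProduct_smul, sum_dotProduct, dotProduct_sum, mulVec_single_one, single_dotProduct,
    one_mul, col_apply, smul_eq_mul, Finset.sum_add_distrib, ← Finset.mul_sum]
  rw [Finset.sum_comm]
  ring

theorem smul_single_add_smul_sum_single_dotProduct_self {c : V} {L : Finset V} (hc : c ∉ L)
    (α γ : ℝ) :
    (α • Pi.single c 1 + γ • ∑ v ∈ L, Pi.single v 1) ⬝ᵥ
        (α • Pi.single c 1 + γ • ∑ v ∈ L, Pi.single v 1) = α ^ 2 + γ ^ 2 * L.card := by
  have hoff : ∑ v ∈ L, ((1 : Matrix V V ℝ) c v + (1 : Matrix V V ℝ) v c) = 0 :=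
    Finset.sum_eq_zero fun v hv => by
      have hcv : c ≠ v := fun h => hc (h ▸ hv)
      simp [one_apply_ne hcv, one_apply_ne hcv.symm]
  have h := dotProduct_mulVec_smul_single_add_smul_sum_single 1 c L α γ
  rw [one_mulVec, hoff] at h
  simp [h, one_apply]

-- With `t = #L`, the vectors `y = t • e_c + 𝟙_L` and `z = e_c - 𝟙_L` are eigenvectors of the star's
-- signless Laplacian (for `t + 1` and `0`), and the right-hand side is
-- `(yᵀ M y - zᵀ M z) / (t + 1) + M c c + ∑ v ∈ L, M v v`. Now `zᵀ M z ≤ ‖z‖²` as `M ≤ 1`, while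
-- `yᵀ M y ≥ 0` and, by Cauchy–Schwarz, `yᵀ (1 - M) y ≤ ‖y‖² ∑ i ∈ insert c L, (1 - M) i i`.
theorem two_mul_diag_sub_card_le_sum_star_edges {M : Matrix V V ℝ} (hM : M.PosSemidef)
    (hM1 : (1 - M).PosSemidef) {c : V} {L : Finset V} (hc : c ∉ L) (hL : L.Nonempty) :
    2 * (M c c + ∑ v ∈ L, M v v) - (L.card + 1) ≤
      ∑ v ∈ L, (Pi.single c 1 + Pi.single v 1) ⬝ᵥ M *ᵥ (Pi.single c 1 + Pi.single v 1) := by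
  have hqM := dotProduct_mulVec_smul_single_add_smul_sum_single M c L
  have hnorm := smul_single_add_smul_sum_single_dotProduct_self (V := V) hc
  set t : ℝ := (L.card : ℝ)
  have ht : 1 ≤ t := by simpa [t] using hL.card_pos
  set a := M c c
  set β := ∑ v ∈ L, (M c v + M v c)
  set X := ∑ v ∈ L, ∑ w ∈ L, M v w
  set m := ∑ v ∈ L, M v v
  set ℓ : V → ℝ := ∑ v ∈ L, Pi.single v 1
  have hcompl : ∀ x : V → ℝ, x ⬝ᵥ (1 - M) *ᵥ x = x ⬝ᵥ x - x ⬝ᵥ M *ᵥ x := fun x => by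
    rw [sub_mulVec, one_mulVec, dotProduct_sub]
  have hy_nonneg : 0 ≤ t ^ 2 * a + t * β + X := by
    have := hM.dotProduct_mulVec_nonneg (t • Pi.single c 1 + (1 : ℝ) • ℓ)
    rw [star_trivial, hqM] at this
    simpa using this
  have hz_le : a - β + X ≤ 1 + t := by
    have := (hM1.dotProduct_mulVec_nonneg ((1 : ℝ) • Pi.single c 1 + (-1 : ℝ) • ℓ))
    rw [star_trivial, hcompl, hqM, hnorm] at this
    linarith
  have hy_le : t ^ 2 + t - (t ^ 2 * a + t * β + X) ≤ (t ^ 2 + t) * (1 - a + (t - m)) := by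
    have := hM1.dotProduct_mulVec_le (s := insert c L) (x := t • Pi.single c 1 + (1 : ℝ) • ℓ)
      (fun i hi => by
        rw [Finset.mem_insert, not_or] at hi
        simp [ℓ, hi.1, Finset.sum_apply, Pi.single_apply, hi.2])
    rw [hcompl, hqM, hnorm, Finset.sum_insert hc] at this
    simpa [Finset.sum_sub_distrib, t, a, m] using this
  have hedge : ∀ v, (Pi.single c 1 + Pi.single v 1) ⬝ᵥ M *ᵥ (Pi.single c 1 + Pi.single v 1) =
      a + (M c v + M v c) + M v v := fun v => by
    simp only [mulVec_add, add_dotProduct, dotProduct_add, mulVec_single_one, single_dotProduct,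
      one_mul, col_apply]
    ring
  rw [Finset.sum_congr rfl fun v _ => hedge v, Finset.sum_add_distrib, Finset.sum_add_distrib,
    Finset.sum_const, nsmul_eq_mul]
  rcases le_total (a + m) t with hs | hs
  · nlinarith
  · nlinarith

end

namespace SimpleGraph

variable {V : Type*} [DecidableEq V] (G : SimpleGraph V)

theorem incMatrix_transpose_apply_of_adj {R : Type*} [AddMonoidWithOne R] [DecidableRel G.Adj]
    {u v : V} (h : G.Adj u v) : (G.incMatrix R)ᵀ s(u, v) = Pi.single u 1 + Pi.single v 1 := by
  ext w
  by_cases hu : w = u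
  · subst hu; simp [incMatrix_apply', h, G.ne_of_adj h]
  · by_cases hv : w = v
    · subst hv; simp [incMatrix_apply', mk'_mem_incidenceSet_iff, h, hu]
    · simp [incMatrix_apply', mk'_mem_incidenceSet_iff, hu, hv]

variable [Fintype V]

theorem exists_maximal_matching_involutive :
    ∃ p : V → V, Involutive p ∧ (∀ v, p v ≠ v → G.Adj v (p v)) ∧
      ∀ u v, p u = u → p v = v → ¬G.Adj u v := by
  classical
  let IsMatching (p : V → V) : Prop := Involutive p ∧ ∀ v, p v ≠ v → G.Adj v (p v)
  obtain ⟨p, hp, hmax⟩ := Finset.exists_max_image (Finset.univ.filter IsMatching)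
    (fun p => (Finset.univ.filter fun v => p v ≠ v).card)
    ⟨id, Finset.mem_filter.mpr ⟨Finset.mem_univ _, fun _ => rfl, by simp⟩⟩
  obtain ⟨hinv, hadj⟩ := (Finset.mem_filter.mp hp).2
  refine ⟨p, hinv, hadj, fun u v hu hv huv => ?_⟩
  have hne : u ≠ v := G.ne_of_adj huv
  let p' : V → V := fun x => if x = u then v else if x = v then u else p x
  have hp'_of_ne : ∀ x, x ≠ u → x ≠ v → p' x = p x := fun x hxu hxv => by simp [p', hxu, hxv]
  have hp' : IsMatching p' := by
    refine ⟨fun x => ?_, fun x hx => ?_⟩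
    · by_cases hxu : x = u
      · simp [p', hxu, hne.symm]
      by_cases hxv : x = v
      · simp [p', hxv]
      have hpu : p x ≠ u := fun h => hxu (by rw [← hinv x, h, hu])
      have hpv : p x ≠ v := fun h => hxv (by rw [← hinv x, h, hv])
      rw [hp'_of_ne x hxu hxv, hp'_of_ne _ hpu hpv, hinv x]
    · by_cases hxu : x = u
      · simp [p', hxu, huv]
      by_cases hxv : x = v
      · simp [p', hxv, hne.symm, huv.symm]
      rw [hp'_of_ne x hxu hxv] at hx ⊢
      exact hadj x hx
  have hsub : (Finset.univ.filter fun x => p x ≠ x) ⊂ Finset.univ.filter fun x => p' x ≠ x := by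
    refine Finset.ssubset_iff_of_subset (fun x hx => ?_) |>.mpr ⟨u, ?_, ?_⟩
    · simp only [Finset.mem_filter, Finset.mem_univ, true_and] at hx ⊢
      have hxu : x ≠ u := by rintro rfl; exact hx hu
      have hxv : x ≠ v := by rintro rfl; exact hx hv
      rwa [hp'_of_ne x hxu hxv]
    · simp [p', hne.symm]
    · simp [hu]
  exact absurd (hmax p' (by simpa using hp')) (not_le.mpr (Finset.card_lt_card hsub))

-- Unmatched vertices hang off their matched neighbours `nb v`, which become centres; a matched edge
-- with nothing hanging off either end is centred at its smaller end.
theorem exists_starForest_of_matching {p nb : V → V} (hinv : Involutive p)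
    (hpadj : ∀ v, p v ≠ v → G.Adj v (p v)) (hnb : ∀ v, G.Adj v (nb v))
    (hnb_matched : ∀ v, p v = v → p (nb v) ≠ nb v) :
    ∃ f : V → V, (∀ v, f v ≠ v → f (f v) = f v ∧ G.Adj v (f v)) ∧
      ∀ c, f c = c → ∃ v, v ≠ c ∧ f v = c := by
  classical
  let _ : LinearOrder V := LinearOrder.lift' _ (Fintype.equivFin V).injective
  let HasLeaf (a : V) : Prop := ∃ v, p v = v ∧ nb v = a
  let IsCenter (a : V) : Prop := HasLeaf a ∨ (¬HasLeaf (p a) ∧ a < p a)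
  let f : V → V := fun a => if p a = a then nb a else if IsCenter a then a else p a
  have hf_matched : ∀ a, p a ≠ a → (f a = if IsCenter a then a else p a) := fun a ha => if_neg ha
  have hf_center : ∀ a, p a ≠ a → IsCenter a → f a = a := fun a ha hc => by
    rw [hf_matched a ha, if_pos hc]
  have hp_matched : ∀ a, p a ≠ a → p (p a) ≠ p a := fun a ha => by rwa [hinv a, ne_comm]
  have hpartner : ∀ a, p a ≠ a → (IsCenter (p a) ↔ HasLeaf (p a) ∨ ¬IsCenter a) := by
    intro a ha
    show HasLeaf (p a) ∨ (¬HasLeaf (p (p a)) ∧ p a < p (p a)) ↔ _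
    rw [hinv a]
    rcases lt_or_gt_of_ne ha with h | h <;> simp [IsCenter, h, h.not_gt]
  refine ⟨f, fun v hv => ?_, fun c hc => ?_⟩
  · by_cases hmatched : p v = v
    · have hfv : f v = nb v := if_pos hmatched
      rw [hfv]
      exact ⟨hf_center _ (hnb_matched v hmatched) (Or.inl ⟨v, hmatched, rfl⟩), hnb v⟩
    have hv_leaf : ¬IsCenter v := fun h => hv (hf_center v hmatched h)
    rw [hf_matched v hmatched, if_neg hv_leaf]
    exact ⟨hf_center _ (hp_matched v hmatched) ((hpartner v hmatched).mpr (Or.inr hv_leaf)),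
      hpadj v hmatched⟩
  · have hmatched : p c ≠ c := fun h => G.ne_of_adj (hnb c) ((if_pos h).symm.trans hc).symm
    by_cases hleaf : HasLeaf c
    · obtain ⟨v, hv, rfl⟩ := hleaf
      exact ⟨v, fun h => hmatched (h ▸ hv), if_pos hv⟩
    have hc_center : IsCenter c := by
      by_contra h
      rw [hf_matched c hmatched, if_neg h] at hc
      exact hmatched hc
    have hpc : ¬IsCenter (p c) := by
      have h := hpartner (p c) (hp_matched c hmatched)
      rw [hinv c] at h
      exact (h.mp hc_center).resolve_left hleaf
    exact ⟨p c, hmatched, by rw [hf_matched _ (hp_matched c hmatched), if_neg hpc, hinv c]⟩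

-- `f v` is the centre of the star containing `v`; the centres are the fixed points of `f`.
theorem exists_starForest (hG : ∀ v, ∃ w, G.Adj v w) :
    ∃ f : V → V, (∀ v, f v ≠ v → f (f v) = f v ∧ G.Adj v (f v)) ∧
      ∀ c, f c = c → ∃ v, v ≠ c ∧ f v = c := by
  obtain ⟨p, hinv, hpadj, hfree⟩ := G.exists_maximal_matching_involutive
  choose nb hnb using hG
  exact G.exists_starForest_of_matching hinv hpadj hnb fun v hv h => hfree v _ hv h (hnb v)

variable [DecidableRel G.Adj]

theorem signlessLap_eq_incMatrix_mul_transpose :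
    signlessLap G = G.incMatrix ℝ * (G.incMatrix ℝ)ᵀ := by
  rw [incMatrix_mul_transpose]
  ext a b
  by_cases h : a = b
  · subst h; simp [signlessLap, degMatrix]; congr!
  · simp [signlessLap, degMatrix, adjMatrix_apply, h]

theorem trace_signlessLap : (signlessLap G).trace = 2 * (numEdges G : ℝ) := by
  rw [signlessLap_eq_incMatrix_mul_transpose, trace]
  simp only [diag, incMatrix_mul_transpose_diag]
  rw [← Nat.cast_sum, sum_degrees_eq_twice_card_edges, numEdges, Set.ncard_eq_toFinset_card']
  simp [edgeFinset]

theorem trace_mul_signlessLap (M : Matrix V V ℝ) :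
    (M * signlessLap G).trace =
      ∑ e, (G.incMatrix ℝ)ᵀ e ⬝ᵥ M *ᵥ (G.incMatrix ℝ)ᵀ e := by
  rw [signlessLap_eq_incMatrix_mul_transpose, ← Matrix.mul_assoc, trace_mul_comm]
  rfl

theorem sum_le_trace_mul_signlessLap {M : Matrix V V ℝ} (hM : M.PosSemidef) (F : Finset (Sym2 V)) :
    ∑ e ∈ F, (G.incMatrix ℝ)ᵀ e ⬝ᵥ M *ᵥ (G.incMatrix ℝ)ᵀ e ≤ (M * signlessLap G).trace := by
  rw [trace_mul_signlessLap]
  exact Finset.sum_le_sum_of_subset_of_nonneg (Finset.subset_univ F)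
    fun e _ _ => by simpa using hM.dotProduct_mulVec_nonneg _

theorem two_mul_trace_sub_card_le_trace_mul_signlessLap (hG : ∀ v, ∃ w, G.Adj v w)
    {M : Matrix V V ℝ} (hM : M.PosSemidef) (hM1 : (1 - M).PosSemidef) :
    2 * M.trace - Fintype.card V ≤ (M * signlessLap G).trace := by
  obtain ⟨f, hleaf, hcenter⟩ := G.exists_starForest hG
  set C := Finset.univ.filter fun v => f v = v
  set W := Finset.univ.filter fun v => f v ≠ v
  set leaves : V → Finset V := fun c => W.filter fun v => f v = c
  let q : (V → ℝ) → ℝ := fun x => x ⬝ᵥ M *ᵥ x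
  have hW : ∀ v ∈ W, f v ∈ C := fun v hv => by
    simpa [C] using (hleaf v (Finset.mem_filter.mp hv).2).1
  have hstar : ∀ c ∈ C, 2 * (M c c + ∑ v ∈ leaves c, M v v) - ((leaves c).card + 1) ≤
      ∑ v ∈ leaves c, q (Pi.single c 1 + Pi.single v 1) := by
    intro c hc
    have hcL : c ∉ leaves c := by simp_all [C, W, leaves]
    obtain ⟨v, hvc, hfv⟩ := hcenter c (Finset.mem_filter.mp hc).2
    have hL : (leaves c).Nonempty := ⟨v, by simp [leaves, W, hfv, Ne.symm hvc]⟩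
    exact two_mul_diag_sub_card_le_sum_star_edges hM hM1 hcL hL
  have hdiag : ∑ c ∈ C, (M c c + ∑ v ∈ leaves c, M v v) = M.trace := by
    rw [Finset.sum_add_distrib, Finset.sum_fiberwise_of_maps_to hW, trace,
      Finset.sum_filter_add_sum_filter_not]
    rfl
  have hcard : ∑ c ∈ C, (((leaves c).card : ℝ) + 1) = Fintype.card V := by
    rw [Finset.sum_add_distrib, ← Nat.cast_sum, ← Finset.card_eq_sum_card_fiberwise hW]
    simp [C, W, ← Nat.cast_add, Finset.card_filter_add_card_filter_not, add_comm]
  have hinj : Set.InjOn (fun v => s(f v, v)) W := by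
    intro u _ v hv huv
    have hv' : f v ≠ v := (Finset.mem_filter.mp hv).2
    rcases Sym2.eq_iff.mp huv with ⟨-, h⟩ | ⟨hfu, rfl⟩
    · exact h
    · exact absurd ((hleaf v hv').1 ▸ hfu) hv'
  calc 2 * M.trace - Fintype.card V
      = ∑ c ∈ C, (2 * (M c c + ∑ v ∈ leaves c, M v v) - ((leaves c).card + 1)) := by
        rw [Finset.sum_sub_distrib, ← Finset.mul_sum, hdiag, hcard]
    _ ≤ ∑ c ∈ C, ∑ v ∈ leaves c, q (Pi.single c 1 + Pi.single v 1) := Finset.sum_le_sum hstar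
    _ = ∑ e ∈ W.image fun v => s(f v, v), q ((G.incMatrix ℝ)ᵀ e) := by
        rw [Finset.sum_image hinj, ← Finset.sum_fiberwise_of_maps_to hW]
        refine Finset.sum_congr rfl fun c _ => Finset.sum_congr rfl fun v hv => ?_
        obtain ⟨hvW, rfl⟩ := Finset.mem_filter.mp hv
        rw [G.incMatrix_transpose_apply_of_adj (hleaf v (Finset.mem_filter.mp hvW).2).2.symm]
    _ ≤ (M * signlessLap G).trace := G.sum_le_trace_mul_signlessLap hM _

end SimpleGraph

theorem splus_le_of_no_isolated_general {n : ℕ} (G : SimpleGraph (Fin n))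
    [DecidableRel G.Adj] (hiso : ∀ v, 0 < G.degree v)
    (k : ℕ) (hkn : k ≤ n) :
    Splus G k ≤ 2 * (numEdges G : ℝ) + 2 * k - n := by
  have hQ := signlessLap_isHermitian G
  obtain ⟨T, hT, hsum⟩ := sumKLargest_eq_sum hQ.eigenvalues (by simpa using hkn)
  obtain ⟨P, hP, hP1, htrace, hPQ⟩ := hQ.exists_trace_mul_eq_sum_eigenvalues T
  have hbound := G.two_mul_trace_sub_card_le_trace_mul_signlessLap
    (fun v => G.degree_pos_iff_exists_adj v |>.mp (hiso v)) hP1 (by rwa [sub_sub_cancel])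
  rw [sub_mul, trace_sub, one_mul, trace_sub, trace_one, htrace, hT, G.trace_signlessLap] at hbound
  rw [Splus, hsum, ← hPQ]
  simp only [Fintype.card_fin] at hbound
  linarith

/-- For a graph `G` with `n` vertices and no isolated vertices, and any `1 ≤ k ≤ n`,
`S⁺_k(G) ≤ 2e(G) + 2k − n`. -/
theorem splus_le_of_no_isolated {n : ℕ} (G : SimpleGraph (Fin n))
    [DecidableRel G.Adj] (hiso : ∀ v, 0 < G.degree v)
    (k : ℕ) (hk1 : 1 ≤ k) (hkn : k ≤ n) :
    Splus G k ≤ 2 * (numEdges G : ℝ) + 2 * k - n :=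
  splus_le_of_no_isolated_general G hiso k hkn
end

section
/- Let G₁ and G₂ be graphs with n₁ and n₂ vertices respectively, each with at least 2 edges. Suppose S⁺_{k_i}(G_i) ≤ e(G_i) + k_i(k_i+1)/2 for all 1 ≤ k_i ≤ n_i and i = 1,2, and suppose additionally that S⁺_k(H) ≤ e(H) + k(k+1)/2 holds for k = 1, 2 for every graph H. Let G₁≈G₂ denote a graph obtained from the disjoint union G₁ ∪ G₂ by adding two edges between V(G₁) and V(G₂). Then for all 1 ≤ k ≤ n₁+n₂, S⁺_k(G₁≈G₂) ≤ e(G₁≈G₂) + k(k+1)/2. -/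
open Matrix Polynomial

/-- `G₁ ≈ G₂`: the graph obtained from the disjoint union of `G₁` and `G₂` by adding the
two edges `u₁v₁` and `u₂v₂` between `V(G₁)` and `V(G₂)`. -/
def connect2Graphs {V₁ V₂ : Type*} [DecidableEq V₁] [DecidableEq V₂]
    (G₁ : SimpleGraph V₁) (G₂ : SimpleGraph V₂)
    (u₁ u₂ : V₁) (v₁ v₂ : V₂) : SimpleGraph (V₁ ⊕ V₂) where
  Adj x y := match x, y with
    | .inl a, .inl b => G₁.Adj a b
    | .inr a, .inr b => G₂.Adj a b
    | .inl a, .inr b => (a = u₁ ∧ b = v₁) ∨ (a = u₂ ∧ b = v₂)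
    | .inr b, .inl a => (a = u₁ ∧ b = v₁) ∨ (a = u₂ ∧ b = v₂)
  symm := by
    constructor
    rintro (a | a) (b | b) h
    · exact G₁.adj_symm h
    · exact h
    · exact h
    · exact G₂.adj_symm h
  loopless := by
    constructor
    rintro (a | a) h
    · exact G₁.irrefl h
    · exact G₂.irrefl h


/-!
Write `Q(G₁ ≈ G₂) = (Q(G₁) ⊕ Q(G₂)) + Q(F)`, where `F` consists of the two connecting edges.
Ky Fan's inequality `S_k(A + B) ≤ S_k(A) + S_k(B)`, and the fact that the `k` largest eigenvalues
of a block diagonal matrix split as `k₁ + k₂ = k` between the blocks, give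
`S⁺_k(G₁ ≈ G₂) ≤ S⁺_{k₁}(G₁) + S⁺_{k₂}(G₂) + S⁺_k(F)`, and `S⁺_k(F) ≤ tr Q(F) = 2 e(F) ≤ 4`.
If `k₁, k₂ ≥ 1` and `k ≠ 2`, the hypotheses on `G₁, G₂` leave a slack `k₁ k₂ ≥ 2`; if one of them
is `0`, then `e(Gᵢ) ≥ 2` pays for `F` instead. The case `k = 2` is the assumed small case.

Ky Fan's inequality follows from `tr (Wᵀ A W) ≤ S_k(A)` for every `W` with `k` orthonormal
columns, with equality when the columns are eigenvectors for the `k` largest eigenvalues.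
-/

open Finset

section SumKLargest

variable {ι κ : Type*} [Fintype ι] [Fintype κ]

lemma sumKLargest_congr {v : ι → ℝ} {w : κ → ℝ} (h : univ.val.map v = univ.val.map w) (k : ℕ) :
    sumKLargest v k = sumKLargest w k := by
  unfold sumKLargest
  rw [h]

lemma exists_finset_sum_eq_sumKLargest (v : ι → ℝ) {k : ℕ} (hk : k ≤ Fintype.card ι) :
    ∃ T : Finset ι, #T = k ∧ ∑ i ∈ T, v i = sumKLargest v k ∧
      ∀ i ∈ T, ∀ j ∉ T, v j ≤ v i := by
  classical
  -- sort the indices by decreasing value; `T` is the first `k` of them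
  set l := (univ : Finset ι).toList.mergeSort (fun i j => decide (v j ≤ v i))
  have hperm : l.Perm (univ : Finset ι).toList := List.mergeSort_perm _ _
  have hnodup : l.Nodup := hperm.nodup_iff.mpr (nodup_toList _)
  have hsorted : l.Pairwise (fun i j => v j ≤ v i) := by
    simpa using List.pairwise_mergeSort (le := fun i j => decide (v j ≤ v i))
      (fun a b c hab hbc => by simp only [decide_eq_true_eq] at *; linarith)
      (fun a b => by simpa using le_total (v b) (v a)) (univ : Finset ι).toList
  have hsort : (univ.val.map v).toList.mergeSort (fun a b => decide (b ≤ a)) = l.map v := by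
    refine List.Perm.eq_of_pairwise' (r := (· ≥ ·)) (List.pairwise_mergeSort' _ _)
      (hsorted.map v fun _ _ h => h) ?_
    refine (List.mergeSort_perm _ _).trans (Multiset.coe_eq_coe.mp ?_)
    rw [Multiset.coe_toList, ← Multiset.map_coe, Multiset.coe_eq_coe.mpr hperm, coe_toList]
  have htake : (l.take k).Nodup := hnodup.sublist (List.take_sublist _ _)
  refine ⟨(l.take k).toFinset, ?_, ?_, ?_⟩
  · rw [List.toFinset_card_of_nodup htake]
    simp [hperm.length_eq, hk]
  · rw [List.sum_toFinset _ htake, sumKLargest, hsort, List.map_take]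
  · intro i hi j hj
    have hl : l = l.take k ++ l.drop k := (List.take_append_drop k l).symm
    have hjl : j ∈ l := hperm.mem_iff.mpr (mem_toList.mpr (mem_univ j))
    rw [hl, List.mem_append] at hjl
    rw [hl, List.pairwise_append] at hsorted
    exact hsorted.2.2 i (List.mem_toFinset.mp hi) j (hjl.resolve_left (by simpa using hj))

lemma weighted_sum_le_sumKLargest (v d : ι → ℝ) (hd₀ : ∀ i, 0 ≤ d i) (hd₁ : ∀ i, d i ≤ 1)
    {k : ℕ} (hdk : ∑ i, d i = k) : ∑ i, d i * v i ≤ sumKLargest v k := by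
  classical
  have hk : k ≤ Fintype.card ι := by
    have : ∑ i, d i ≤ ∑ _i : ι, (1 : ℝ) := sum_le_sum fun i _ => hd₁ i
    rw [hdk] at this
    exact_mod_cast (by simpa using this : (k : ℝ) ≤ Fintype.card ι)
  obtain ⟨T, hTcard, hTsum, hT⟩ := exists_finset_sum_eq_sumKLargest v hk
  obtain ⟨t, ht_le, le_ht⟩ : ∃ t, (∀ i ∈ T, t ≤ v i) ∧ ∀ j ∉ T, v j ≤ t := by
    rcases T.eq_empty_or_nonempty with rfl | hne
    · obtain ⟨t, ht⟩ := (Set.finite_range v).bddAbove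
      exact ⟨t, by simp, fun j _ => ht ⟨j, rfl⟩⟩
    · exact ⟨T.inf' hne v, fun i hi => inf'_le v hi,
        fun j hj => le_inf' hne v fun i hi => hT i hi j hj⟩
  -- `d` and the indicator of `T` both have total mass `k`, so shifting `v` by `t` is free
  have hshift : ∑ i, d i * v i - ∑ i ∈ T, v i =
      ∑ i, (d i - if i ∈ T then 1 else 0) * (v i - t) := by
    simp only [sub_mul, mul_sub, sum_sub_distrib, ← sum_mul, ite_mul, one_mul, zero_mul,
      sum_ite_mem, univ_inter, hdk]
    simp [hTcard]
  rw [← hTsum, ← sub_nonpos, hshift]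
  refine sum_nonpos fun i _ => ?_
  by_cases hi : i ∈ T
  · simp only [hi, if_true]
    exact mul_nonpos_of_nonpos_of_nonneg (by linarith [hd₁ i]) (by linarith [ht_le i hi])
  · simp only [hi, if_false, sub_zero]
    exact mul_nonpos_of_nonneg_of_nonpos (hd₀ i) (by linarith [le_ht i hi])

lemma sum_le_sumKLargest (v : ι → ℝ) (S : Finset ι) : ∑ i ∈ S, v i ≤ sumKLargest v #S := by
  classical
  simpa [ite_mul, sum_ite_mem] using
    weighted_sum_le_sumKLargest v (fun i => if i ∈ S then 1 else 0)
      (fun i => by split_ifs <;> norm_num) (fun i => by split_ifs <;> norm_num) (by simp)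

lemma sumKLargest_le_sum (v : ι → ℝ) (hv : ∀ i, 0 ≤ v i) {k : ℕ} (hk : k ≤ Fintype.card ι) :
    sumKLargest v k ≤ ∑ i, v i := by
  obtain ⟨T, -, hTsum, -⟩ := exists_finset_sum_eq_sumKLargest v hk
  rw [← hTsum]
  exact sum_le_sum_of_subset_of_nonneg (subset_univ T) fun i _ _ => hv i

lemma exists_sumKLargest_sumElim_le (v : ι → ℝ) (w : κ → ℝ) {k : ℕ}
    (hk : k ≤ Fintype.card ι + Fintype.card κ) :
    ∃ k₁ k₂, k₁ + k₂ = k ∧ k₁ ≤ Fintype.card ι ∧ k₂ ≤ Fintype.card κ ∧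
      sumKLargest (Sum.elim v w) k ≤ sumKLargest v k₁ + sumKLargest w k₂ := by
  obtain ⟨T, hTcard, hTsum, -⟩ :=
    exists_finset_sum_eq_sumKLargest (Sum.elim v w) (by simpa using hk)
  refine ⟨#T.toLeft, #T.toRight, ?_, card_le_univ _, card_le_univ _, ?_⟩
  · rw [← hTcard, card_toLeft_add_card_toRight]
  · rw [← hTsum, sum_sum_eq_sum_toLeft_add_sum_toRight]
    exact add_le_add (sum_le_sumKLargest v _) (sum_le_sumKLargest w _)

end SumKLargest

namespace Matrix

lemma trace_fromBlocks {n m R : Type*} [Fintype n] [Fintype m] [AddCommMonoid R]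
    (A : Matrix n n R) (B : Matrix n m R) (C : Matrix m n R) (D : Matrix m m R) :
    (fromBlocks A B C D).trace = A.trace + D.trace := by
  simp [trace, Fintype.sum_sum_type]

lemma trace_transpose_mul_diagonal_mul {n m : Type*} [Fintype n] [Fintype m] [DecidableEq n]
    (Y : Matrix n m ℝ) (w : n → ℝ) :
    (Yᵀ * diagonal w * Y).trace = ∑ j, (Y * Yᵀ) j j * w j := by
  rw [Matrix.mul_assoc, trace_mul_comm, Matrix.mul_assoc, trace]
  simp [diagonal_mul, mul_comm]

lemma mul_transpose_diag_nonneg {n m : Type*} [Fintype m] (Y : Matrix n m ℝ) (j : n) :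
    0 ≤ (Y * Yᵀ) j j := by
  simpa [mul_apply] using sum_nonneg fun i (_ : i ∈ univ) => mul_self_nonneg (Y j i)

lemma mul_transpose_diag_le_one {n m : Type*} [Fintype n] [Fintype m] [DecidableEq m]
    {Y : Matrix n m ℝ} (hY : Yᵀ * Y = 1) (j : n) : (Y * Yᵀ) j j ≤ 1 := by
  set P := Y * Yᵀ
  have hP : P * P = P := by
    simp only [P, Matrix.mul_assoc, ← Matrix.mul_assoc Yᵀ, hY, Matrix.one_mul]
  have hPsymm : Pᵀ = P := by simp [P]
  have hsq : P j j ^ 2 ≤ P j j :=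
    calc P j j ^ 2 ≤ ∑ i, P j i ^ 2 :=
          single_le_sum (f := fun i => P j i ^ 2) (fun i _ => sq_nonneg _) (mem_univ j)
      _ = ∑ i, P j i * P i j := by
          refine sum_congr rfl fun i _ => ?_
          rw [sq, ← hPsymm, transpose_apply, hPsymm]
      _ = P j j := by rw [← mul_apply, hP]
  nlinarith [Y.mul_transpose_diag_nonneg j]

namespace IsHermitian

variable {n : Type*} [Fintype n] [DecidableEq n] {A : Matrix n n ℝ} (hA : A.IsHermitian)
lemma transpose_eigenvectorUnitary_mul_self :
    (hA.eigenvectorUnitary : Matrix n n ℝ)ᵀ * hA.eigenvectorUnitary = 1 := by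
  simpa [star_eq_conjTranspose] using Unitary.coe_star_mul_self hA.eigenvectorUnitary

lemma transpose_eigenvectorUnitary_mul_mul :
    (hA.eigenvectorUnitary : Matrix n n ℝ)ᵀ * A * hA.eigenvectorUnitary =
      diagonal hA.eigenvalues := by
  simpa [Unitary.conjStarAlgAut_apply, star_eq_conjTranspose] using
    hA.conjStarAlgAut_star_eigenvectorUnitary

lemma eq_eigenvectorUnitary_mul_diagonal_mul :
    A = hA.eigenvectorUnitary * diagonal hA.eigenvalues *
      (hA.eigenvectorUnitary : Matrix n n ℝ)ᵀ := by
  simpa [Unitary.conjStarAlgAut_apply, star_eq_conjTranspose] using hA.spectral_theorem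

lemma trace_transpose_mul_mul_le_sumKLargest {m : Type*} [Fintype m] [DecidableEq m]
    {W : Matrix n m ℝ} (hW : Wᵀ * W = 1) :
    (Wᵀ * A * W).trace ≤ sumKLargest hA.eigenvalues (Fintype.card m) := by
  set U : Matrix n n ℝ := ↑hA.eigenvectorUnitary
  set Y := Uᵀ * W
  have hUUt : U * Uᵀ = 1 := mul_eq_one_comm.mp hA.transpose_eigenvectorUnitary_mul_self
  have hY : Yᵀ * Y = 1 := by
    simp only [Y, transpose_mul, transpose_transpose, Matrix.mul_assoc,
      ← Matrix.mul_assoc U, hUUt, Matrix.one_mul, hW]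
  have htrace : (Wᵀ * A * W).trace = ∑ j, (Y * Yᵀ) j j * hA.eigenvalues j := by
    rw [← trace_transpose_mul_diagonal_mul]
    conv_lhs => rw [hA.eq_eigenvectorUnitary_mul_diagonal_mul]
    simp only [Y, U, transpose_mul, transpose_transpose, Matrix.mul_assoc]
  rw [htrace]
  refine weighted_sum_le_sumKLargest _ _ Y.mul_transpose_diag_nonneg
    (mul_transpose_diag_le_one hY) ?_
  change (Y * Yᵀ).trace = _
  rw [trace_mul_comm, hY, trace_one]

lemma exists_isometry_trace_eq_sum_eigenvalues (T : Finset n) :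
    ∃ W : Matrix n T ℝ, Wᵀ * W = 1 ∧ (Wᵀ * A * W).trace = ∑ i ∈ T, hA.eigenvalues i := by
  set U : Matrix n n ℝ := ↑hA.eigenvectorUnitary
  set W : Matrix n T ℝ := U.submatrix id (↑)
  refine ⟨W, ?_, ?_⟩
  · rw [transpose_submatrix, ← submatrix_mul _ _ _ _ _ Function.bijective_id,
      hA.transpose_eigenvectorUnitary_mul_self, submatrix_one _ Subtype.val_injective]
  · have hdiag : Wᵀ * A * W = (diagonal hA.eigenvalues).submatrix (Subtype.val : T → n) (↑) := by
      rw [← hA.transpose_eigenvectorUnitary_mul_mul, submatrix_mul _ _ _ id _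
        Function.bijective_id, submatrix_mul _ _ _ id _ Function.bijective_id, submatrix_id_id,
        transpose_submatrix]
    rw [hdiag, trace, diag_submatrix]
    simpa using sum_coe_sort T hA.eigenvalues

lemma sumKLargest_eigenvalues_add_le {B C : Matrix n n ℝ} (hB : B.IsHermitian)
    (hC : C.IsHermitian) (hABC : C = A + B) {k : ℕ} (hk : k ≤ Fintype.card n) :
    sumKLargest hC.eigenvalues k ≤ sumKLargest hA.eigenvalues k + sumKLargest hB.eigenvalues k := by
  obtain ⟨T, rfl, hTsum, -⟩ := exists_finset_sum_eq_sumKLargest hC.eigenvalues hk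
  obtain ⟨W, hW, htrace⟩ := hC.exists_isometry_trace_eq_sum_eigenvalues T
  rw [← hTsum, ← htrace, hABC, Matrix.mul_add, Matrix.add_mul, trace_add, ← Fintype.card_coe T]
  exact add_le_add (hA.trace_transpose_mul_mul_le_sumKLargest hW)
    (hB.trace_transpose_mul_mul_le_sumKLargest hW)

lemma map_eigenvalues_fromBlocks {m : Type*} [Fintype m] [DecidableEq m] {D : Matrix m m ℝ}
    (hD : D.IsHermitian) (h : (Matrix.fromBlocks A 0 0 D).IsHermitian) :
    univ.val.map h.eigenvalues = univ.val.map (Sum.elim hA.eigenvalues hD.eigenvalues) := by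
  have key := h.roots_charpoly_eq_eigenvalues
  rw [charpoly_fromBlocks_zero₁₂,
    Polynomial.roots_mul ((charpoly_monic A).mul (charpoly_monic D)).ne_zero,
    hA.roots_charpoly_eq_eigenvalues, hD.roots_charpoly_eq_eigenvalues] at key
  simp only [RCLike.ofReal_real_eq_id, Function.id_comp] at key
  rw [← key, ← univ_disjSum_univ, val_disjSum, Multiset.disjSum, Multiset.map_add,
    Multiset.map_map, Multiset.map_map]
  rfl

end IsHermitian

lemma PosSemidef.sumKLargest_eigenvalues_le_trace {n : Type*} [Fintype n] [DecidableEq n]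
    {A : Matrix n n ℝ} (hA : A.PosSemidef) {k : ℕ} (hk : k ≤ Fintype.card n) :
    sumKLargest hA.isHermitian.eigenvalues k ≤ A.trace := by
  rw [hA.isHermitian.trace_eq_sum_eigenvalues]
  simpa using sumKLargest_le_sum _ hA.eigenvalues_nonneg hk

end Matrix

lemma numEdges_eq_card_edgeFinset {V : Type*} [Fintype V] (G : SimpleGraph V)
    [DecidableRel G.Adj] : numEdges G = #G.edgeFinset := by
  rw [numEdges, SimpleGraph.edgeFinset, Set.ncard_eq_toFinset_card']

section SignlessLaplacian

variable {V : Type*} [Fintype V] [DecidableEq V]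

lemma Splus_zero (G : SimpleGraph V) : Splus G 0 = 0 := rfl

lemma trace_signlessLap (G : SimpleGraph V) : (signlessLap G).trace = 2 * numEdges G := by
  classical
  rw [signlessLap, trace_add, SimpleGraph.trace_adjMatrix, add_zero, SimpleGraph.degMatrix,
    trace_diagonal, numEdges_eq_card_edgeFinset]
  exact_mod_cast G.sum_degrees_eq_twice_card_edges

lemma posSemidef_signlessLap (G : SimpleGraph V) : (signlessLap G).PosSemidef := by
  classical
  have h : signlessLap G = G.incMatrix ℝ * (G.incMatrix ℝ)ᴴ := by
    rw [conjTranspose_eq_transpose_of_trivial, SimpleGraph.incMatrix_mul_transpose]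
    ext i j
    by_cases hij : i = j
    · subst hij
      simp [signlessLap, SimpleGraph.degMatrix]
    · simp [signlessLap, SimpleGraph.degMatrix, hij, SimpleGraph.adjMatrix_apply]
  rw [h]
  exact posSemidef_self_mul_conjTranspose _

lemma Splus_le_two_mul_numEdges (G : SimpleGraph V) {k : ℕ} (hk : k ≤ Fintype.card V) :
    Splus G k ≤ 2 * numEdges G := by
  rw [← trace_signlessLap]
  exact (posSemidef_signlessLap G).sumKLargest_eigenvalues_le_trace hk

open Classical in
lemma signlessLap_eq_diagonal_add (G : SimpleGraph V) :
    signlessLap G = diagonal (G.adjMatrix ℝ *ᵥ 1) + G.adjMatrix ℝ := by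
  rw [signlessLap, SimpleGraph.degMatrix]
  congr 2
  ext v
  simp

end SignlessLaplacian

section Connect

variable {V₁ V₂ : Type*} [DecidableEq V₁] [DecidableEq V₂]
  (G₁ : SimpleGraph V₁) (G₂ : SimpleGraph V₂) (u₁ u₂ : V₁) (v₁ v₂ : V₂)

@[simp] lemma connect2Graphs_adj_inl_inl {a b : V₁} :
    (connect2Graphs G₁ G₂ u₁ u₂ v₁ v₂).Adj (.inl a) (.inl b) ↔ G₁.Adj a b := Iff.rfl

@[simp] lemma connect2Graphs_adj_inr_inr {a b : V₂} :
    (connect2Graphs G₁ G₂ u₁ u₂ v₁ v₂).Adj (.inr a) (.inr b) ↔ G₂.Adj a b := Iff.rfl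

@[simp] lemma connect2Graphs_adj_inl_inr {a : V₁} {b : V₂} :
    (connect2Graphs G₁ G₂ u₁ u₂ v₁ v₂).Adj (.inl a) (.inr b) ↔
      a = u₁ ∧ b = v₁ ∨ a = u₂ ∧ b = v₂ := Iff.rfl

@[simp] lemma connect2Graphs_adj_inr_inl {a : V₁} {b : V₂} :
    (connect2Graphs G₁ G₂ u₁ u₂ v₁ v₂).Adj (.inr b) (.inl a) ↔
      a = u₁ ∧ b = v₁ ∨ a = u₂ ∧ b = v₂ := Iff.rfl

open Classical in
lemma adjMatrix_connect2Graphs :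
    (connect2Graphs G₁ G₂ u₁ u₂ v₁ v₂).adjMatrix ℝ =
      fromBlocks (G₁.adjMatrix ℝ) 0 0 (G₂.adjMatrix ℝ) +
        (connect2Graphs ⊥ ⊥ u₁ u₂ v₁ v₂).adjMatrix ℝ := by
  ext (a | a) (b | b) <;> simp [SimpleGraph.adjMatrix_apply]

lemma numEdges_connect2Graphs_bot_le_two :
    numEdges (connect2Graphs (⊥ : SimpleGraph V₁) (⊥ : SimpleGraph V₂) u₁ u₂ v₁ v₂) ≤ 2 := by
  have hsub : (connect2Graphs (⊥ : SimpleGraph V₁) (⊥ : SimpleGraph V₂) u₁ u₂ v₁ v₂).edgeSet ⊆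
      {s(.inl u₁, .inr v₁), s(.inl u₂, .inr v₂)} := by
    rintro ⟨(a | a), (b | b)⟩ h <;> simp_all [and_comm]
  calc numEdges _ ≤ ({s(.inl u₁, .inr v₁), s(.inl u₂, .inr v₂)} : Set (Sym2 (V₁ ⊕ V₂))).ncard :=
        Set.ncard_le_ncard hsub (Set.toFinite _)
    _ ≤ 2 := (Set.ncard_insert_le _ _).trans (by simp)

variable [Fintype V₁] [Fintype V₂]

lemma signlessLap_connect2Graphs :
    signlessLap (connect2Graphs G₁ G₂ u₁ u₂ v₁ v₂) =
      fromBlocks (signlessLap G₁) 0 0 (signlessLap G₂) +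
        signlessLap (connect2Graphs ⊥ ⊥ u₁ u₂ v₁ v₂) := by
  classical
  rw [signlessLap_eq_diagonal_add, adjMatrix_connect2Graphs, signlessLap_eq_diagonal_add G₁,
    signlessLap_eq_diagonal_add G₂, signlessLap_eq_diagonal_add (connect2Graphs ⊥ ⊥ _ _ _ _),
    add_mulVec]
  ext (a | a) (b | b) <;> simp [fromBlocks_mulVec, diagonal_apply] <;> split_ifs <;> ring

lemma numEdges_connect2Graphs :
    numEdges (connect2Graphs G₁ G₂ u₁ u₂ v₁ v₂) =
      numEdges G₁ + numEdges G₂ + numEdges (connect2Graphs ⊥ ⊥ u₁ u₂ v₁ v₂) := by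
  have h := congrArg trace (signlessLap_connect2Graphs G₁ G₂ u₁ u₂ v₁ v₂)
  rw [trace_add, trace_fromBlocks, trace_signlessLap, trace_signlessLap, trace_signlessLap,
    trace_signlessLap] at h
  have h' : (numEdges (connect2Graphs G₁ G₂ u₁ u₂ v₁ v₂) : ℝ) =
      numEdges G₁ + numEdges G₂ + numEdges (connect2Graphs ⊥ ⊥ u₁ u₂ v₁ v₂) := by linarith
  exact_mod_cast h'

lemma exists_Splus_connect2Graphs_le {k : ℕ} (hk : k ≤ Fintype.card V₁ + Fintype.card V₂) :
    ∃ k₁ k₂, k₁ + k₂ = k ∧ k₁ ≤ Fintype.card V₁ ∧ k₂ ≤ Fintype.card V₂ ∧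
      Splus (connect2Graphs G₁ G₂ u₁ u₂ v₁ v₂) k ≤
        Splus G₁ k₁ + Splus G₂ k₂ + 2 * numEdges (connect2Graphs ⊥ ⊥ u₁ u₂ v₁ v₂) := by
  have hQ₁ := signlessLap_isHermitian G₁
  have hQ₂ := signlessLap_isHermitian G₂
  have hB : (fromBlocks (signlessLap G₁) 0 0 (signlessLap G₂)).IsHermitian :=
    hQ₁.fromBlocks (by simp) hQ₂
  obtain ⟨k₁, k₂, hk₁₂, hk₁, hk₂, hsplit⟩ :=
    exists_sumKLargest_sumElim_le hQ₁.eigenvalues hQ₂.eigenvalues hk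
  refine ⟨k₁, k₂, hk₁₂, hk₁, hk₂, ?_⟩
  have hcard : k ≤ Fintype.card (V₁ ⊕ V₂) := by simpa using hk
  calc Splus (connect2Graphs G₁ G₂ u₁ u₂ v₁ v₂) k
      ≤ sumKLargest hB.eigenvalues k + Splus (connect2Graphs ⊥ ⊥ u₁ u₂ v₁ v₂) k :=
        hB.sumKLargest_eigenvalues_add_le (signlessLap_isHermitian _)
          (signlessLap_isHermitian _) (signlessLap_connect2Graphs G₁ G₂ u₁ u₂ v₁ v₂) hcard
    _ ≤ Splus G₁ k₁ + Splus G₂ k₂ + 2 * numEdges (connect2Graphs ⊥ ⊥ u₁ u₂ v₁ v₂) := by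
        refine add_le_add ?_ (Splus_le_two_mul_numEdges _ hcard)
        rwa [sumKLargest_congr (hQ₁.map_eigenvalues_fromBlocks hQ₂ hB)]

end Connect

theorem splus_le_connect2Graphs_general {n₁ n₂ : ℕ} (G₁ : SimpleGraph (Fin n₁))
    (G₂ : SimpleGraph (Fin n₂))
    (hne₁ : 2 ≤ numEdges G₁) (hne₂ : 2 ≤ numEdges G₂)
    (h₁ : ∀ k₁ : ℕ, 1 ≤ k₁ → k₁ ≤ n₁ → Splus G₁ k₁ ≤ (numEdges G₁ : ℝ) + k₁ * (k₁ + 1) / 2)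
    (h₂ : ∀ k₂ : ℕ, 1 ≤ k₂ → k₂ ≤ n₂ → Splus G₂ k₂ ≤ (numEdges G₂ : ℝ) + k₂ * (k₂ + 1) / 2)
    (hsmall : ∀ (W : Type) [Fintype W] [DecidableEq W] (H : SimpleGraph W), ∀ k ∈ ({1, 2} : Set ℕ),
      Splus H k ≤ (numEdges H : ℝ) + k * (k + 1) / 2)
    (u₁ u₂ : Fin n₁) (v₁ v₂ : Fin n₂)
    (k : ℕ) (hkn : k ≤ n₁ + n₂) :
    Splus (connect2Graphs G₁ G₂ u₁ u₂ v₁ v₂) k ≤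
      (numEdges (connect2Graphs G₁ G₂ u₁ u₂ v₁ v₂) : ℝ) + k * (k + 1) / 2 := by
  by_cases hk2 : k = 2
  · exact hsmall _ _ k (by simp [hk2])
  obtain ⟨k₁, k₂, rfl, hk₁, hk₂, hsplit⟩ :=
    exists_Splus_connect2Graphs_le G₁ G₂ u₁ u₂ v₁ v₂ (by simpa using hkn)
  simp only [Fintype.card_fin] at hk₁ hk₂
  have hF : (numEdges (connect2Graphs (⊥ : SimpleGraph (Fin n₁)) ⊥ u₁ u₂ v₁ v₂) : ℝ) ≤ 2 := by
    exact_mod_cast numEdges_connect2Graphs_bot_le_two u₁ u₂ v₁ v₂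
  have he₁ : (2 : ℝ) ≤ numEdges G₁ := by exact_mod_cast hne₁
  have he₂ : (2 : ℝ) ≤ numEdges G₂ := by exact_mod_cast hne₂
  rw [numEdges_connect2Graphs]
  push_cast
  rcases Nat.eq_zero_or_pos k₁ with rfl | hk₁0
  · have b₂ : Splus G₂ k₂ ≤ numEdges G₂ + (k₂ : ℝ) * (k₂ + 1) / 2 :=
      (Nat.eq_zero_or_pos k₂).elim (fun h => by simp [h, Splus_zero]) (h₂ k₂ · hk₂)
    rw [Splus_zero] at hsplit
    linarith
  have b₁ := h₁ k₁ hk₁0 hk₁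
  rcases Nat.eq_zero_or_pos k₂ with rfl | hk₂0
  · rw [Splus_zero] at hsplit
    linarith
  have b₂ := h₂ k₂ hk₂0 hk₂
  have hprod : (2 : ℝ) ≤ k₁ * k₂ := by
    have : 2 ≤ k₁ * k₂ := by rcases (by omega : 2 ≤ k₁ ∨ 2 ≤ k₂) with h | h <;> nlinarith
    exact_mod_cast this
  nlinarith

/-- If `G₁, G₂` each have at least two edges, satisfy `S⁺_{kᵢ}(Gᵢ) ≤ e(Gᵢ) + kᵢ(kᵢ+1)/2`
for all `1 ≤ kᵢ ≤ nᵢ`, and the conjecture holds for `k = 1, 2` for every graph, then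
`G₁ ≈ G₂` satisfies `S⁺_k ≤ e + k(k+1)/2` for all `1 ≤ k ≤ n₁ + n₂`. -/
theorem splus_le_connect2Graphs {n₁ n₂ : ℕ} (G₁ : SimpleGraph (Fin n₁))
    (G₂ : SimpleGraph (Fin n₂))
    (hne₁ : 2 ≤ numEdges G₁) (hne₂ : 2 ≤ numEdges G₂)
    (h₁ : ∀ k₁ : ℕ, 1 ≤ k₁ → k₁ ≤ n₁ → Splus G₁ k₁ ≤ (numEdges G₁ : ℝ) + k₁ * (k₁ + 1) / 2)
    (h₂ : ∀ k₂ : ℕ, 1 ≤ k₂ → k₂ ≤ n₂ → Splus G₂ k₂ ≤ (numEdges G₂ : ℝ) + k₂ * (k₂ + 1) / 2)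
    (hsmall : ∀ (W : Type) [Fintype W] [DecidableEq W] (H : SimpleGraph W), ∀ k ∈ ({1, 2} : Set ℕ),
      Splus H k ≤ (numEdges H : ℝ) + k * (k + 1) / 2)
    (u₁ u₂ : Fin n₁) (v₁ v₂ : Fin n₂) (hdist : (u₁, v₁) ≠ (u₂, v₂))
    (k : ℕ) (hk1 : 1 ≤ k) (hkn : k ≤ n₁ + n₂) :
    Splus (connect2Graphs G₁ G₂ u₁ u₂ v₁ v₂) k ≤
      (numEdges (connect2Graphs G₁ G₂ u₁ u₂ v₁ v₂) : ℝ) + k * (k + 1) / 2 :=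
  splus_le_connect2Graphs_general G₁ G₂ hne₁ hne₂ h₁ h₂ hsmall u₁ u₂ v₁ v₂ k hkn
end
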